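/- Let f : F_2^n × F_2^n → F_2 be given by f(x,y) = ⟨x, σ(y)⟩ ⊕ ψ(y) for some map σ : F_2^n → F_2^n and ψ : F_2^n → F_2. If f is a bent function, then σ is a bijection. -/

import Mathlib

/-!
If `c` is not a value of `σ`, the Walsh coefficient of `f` at `(c, 0)` vanishes: summing over `x`
first, each inner sum is a character sum `∑ₓ (-1)^⟨x, σ y + c⟩` with `σ y + c ≠ 0`, hence `0`.
A bent function has no vanishing Walsh coefficient, so `σ` is surjective, hence bijective.
-/

abbrev Bv (n : ℕ) := Fin n → ZMod 2

/-- The standard inner product on `F_2^n`. -/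
def ip (n : ℕ) (a b : Bv n) : ZMod 2 := ∑ i, a i * b i

/-- The inner product on `F_2^n × F_2^n`. -/
def ipP (n : ℕ) (a x : Bv n × Bv n) : ZMod 2 := ip n a.1 x.1 + ip n a.2 x.2

/-- A function in `2n` variables is bent if all its Walsh–Hadamard coefficients
have absolute value `2^n`. -/
def IsBentP (n : ℕ) (f : Bv n × Bv n → ZMod 2) : Prop :=
  ∀ a : Bv n × Bv n,
    |∑ x : Bv n × Bv n, (if f x + ipP n a x = 0 then (1:ℤ) else -1)| = 2^n

def signZMod2 (u : ZMod 2) : ℤ := if u = 0 then 1 else -1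

lemma signZMod2_add (u v : ZMod 2) : signZMod2 (u + v) = signZMod2 u * signZMod2 v := by
  revert u v; decide

lemma signZMod2_sum {ι : Type*} (s : Finset ι) (f : ι → ZMod 2) :
    signZMod2 (∑ i ∈ s, f i) = ∏ i ∈ s, signZMod2 (f i) := by
  classical
  induction s using Finset.induction with
  | empty => rfl
  | insert _ _ hi ih => rw [Finset.sum_insert hi, Finset.prod_insert hi, signZMod2_add, ih]

lemma sum_signZMod2_mul_of_ne_zero {t : ZMod 2} (ht : t ≠ 0) :
    ∑ b : ZMod 2, signZMod2 (b * t) = 0 := by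
  revert t; decide

lemma ip_comm (n : ℕ) (a b : Bv n) : ip n a b = ip n b a := by
  simp only [ip, mul_comm]

lemma ip_add_right (n : ℕ) (a b c : Bv n) : ip n a (b + c) = ip n a b + ip n a c := by
  simp only [ip, Pi.add_apply, mul_add, Finset.sum_add_distrib]

lemma ip_zero_left (n : ℕ) (b : Bv n) : ip n 0 b = 0 := by
  simp [ip]

lemma sum_signZMod2_ip_of_ne_zero (n : ℕ) {c : Bv n} (hc : c ≠ 0) :
    ∑ x : Bv n, signZMod2 (ip n x c) = 0 := by
  classical
  obtain ⟨i, hi⟩ : ∃ i, c i ≠ 0 := Function.ne_iff.mp hc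
  simp only [ip, signZMod2_sum]
  rw [← Fintype.prod_sum (fun i b => signZMod2 (b * c i))]
  exact Finset.prod_eq_zero (Finset.mem_univ i) (sum_signZMod2_mul_of_ne_zero hi)

def walshP (n : ℕ) (f : Bv n × Bv n → ZMod 2) (a : Bv n × Bv n) : ℤ :=
  ∑ p : Bv n × Bv n, signZMod2 (f p + ipP n a p)

lemma isBentP_iff_abs_walshP (n : ℕ) (f : Bv n × Bv n → ZMod 2) :
    IsBentP n f ↔ ∀ a, |walshP n f a| = 2 ^ n :=
  Iff.rfl

lemma walshP_maioranaMcFarland_eq_zero (n : ℕ) (σ : Bv n → Bv n) (ψ : Bv n → ZMod 2)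
    {c : Bv n} (hc : c ∉ Set.range σ) :
    walshP n (fun p => ip n p.1 (σ p.2) + ψ p.2) (c, 0) = 0 := by
  have hsplit : ∀ x y, ip n x (σ y) + ψ y + ipP n (c, 0) (x, y) = ψ y + ip n x (σ y + c) := by
    intro x y
    rw [ipP, ip_zero_left, ip_comm n c x, ip_add_right]
    ring
  have hne : ∀ y, σ y + c ≠ 0 := fun y hz =>
    hc ⟨y, funext fun i => CharTwo.add_eq_zero.mp (congrFun hz i)⟩
  calc walshP n (fun p => ip n p.1 (σ p.2) + ψ p.2) (c, 0)
      = ∑ y, signZMod2 (ψ y) * ∑ x, signZMod2 (ip n x (σ y + c)) := by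
        rw [walshP, Fintype.sum_prod_type, Finset.sum_comm]
        simp only [hsplit, signZMod2_add, Finset.mul_sum]
    _ = 0 := by simp [sum_signZMod2_ip_of_ne_zero n (hne _)]

theorem stmt_16 (n : ℕ) (σ : Bv n → Bv n) (ψ : Bv n → ZMod 2)
    (h : IsBentP n (fun p => ip n p.1 (σ p.2) + ψ p.2)) :
    Function.Bijective σ := by
  refine Finite.surjective_iff_bijective.mp fun c => ?_
  by_contra hc
  have hwalsh := (isBentP_iff_abs_walshP n _).mp h (c, 0)
  rw [walshP_maioranaMcFarland_eq_zero n σ ψ hc, abs_zero] at hwalsh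
  exact pow_ne_zero n two_ne_zero hwalsh.symm
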